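/- arXiv:2410.17953 — 2 statements merged into one kernel-verified Lean document; each statement's English description precedes it below -/
import Mathlib

section
/- Fix real numbers b, d and strictly positive real numbers k, u. For each a > 0, let A(a) be the 2×2 real matrix with rows (b − a·u, a·k) and (a·u, d − a·k), let T(a) = b + d − a(k+u) be its trace and D(a) = bd − a(bk + du) its determinant, and let λ(a) = (T(a) + √(T(a)² − 4·D(a)))/2 be its largest eigenvalue. Then λ(a) converges, as a → +∞, to (b·k + d·u)/(k + u). -/
open Matrix Filter

/-- Fast-exchange limit: for the family of 2×2 matrices
`A(a) = [[b − au, ak],[au, d − ak]]` with trace `T(a)`, determinant `D(a)`, and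
largest eigenvalue `λ(a) = (T(a) + √(T(a)² − 4 D(a)))/2`, the eigenvalue `λ(a)`
converges, as `a → +∞`, to the DIP rate `(bk + du)/(k + u)`. -/
theorem tendsto_frobenius_eigenvalue_DIP (b d k u : ℝ) (hk : 0 < k) (hu : 0 < u)
    (A : ℝ → Matrix (Fin 2) (Fin 2) ℝ)
    (hA : ∀ a, 0 < a → A a = !![b - a * u, a * k; a * u, d - a * k])
    (T D lam : ℝ → ℝ)
    (hT : ∀ a, T a = b + d - a * (k + u))
    (hD : ∀ a, D a = b * d - a * (b * k + d * u))
    (hlam : ∀ a, lam a = (T a + Real.sqrt (T a ^ 2 - 4 * D a)) / 2) :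
    Tendsto lam atTop (nhds ((b * k + d * u) / (k + u))) := by
  have hc0 : (0:ℝ) < k + u := by positivity
  set G : ℝ → ℝ := fun x =>
    (-2 * (b * d * x - (b * k + d * u))) /
      (Real.sqrt ((k + u) ^ 2 + 2 * (b - d) * (k - u) * x + (b - d) ^ 2 * x ^ 2)
        - ((b + d) * x - (k + u))) with hG
  have hcont : ContinuousAt G 0 := by
    apply ContinuousAt.div
    · fun_prop
    · exact ((Real.continuous_sqrt.continuousAt).comp (by fun_prop)).sub (by fun_prop)
    · have : Real.sqrt ((k + u) ^ 2 + 2 * (b - d) * (k - u) * 0 + (b - d) ^ 2 * 0 ^ 2)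
          = k + u := by
        simp [Real.sqrt_sq hc0.le]
      simp only [this]
      intro h
      nlinarith
  have hlim : Tendsto (fun a : ℝ => G a⁻¹) atTop (nhds (G 0)) :=
    hcont.tendsto.comp tendsto_inv_atTop_zero
  have hG0 : G 0 = (b * k + d * u) / (k + u) := by
    have : Real.sqrt ((k + u) ^ 2 + 2 * (b - d) * (k - u) * 0 + (b - d) ^ 2 * 0 ^ 2)
        = k + u := by simp [Real.sqrt_sq hc0.le]
    rw [hG]
    simp only [this]
    rw [show -2 * (b * d * 0 - (b * k + d * u)) = 2 * (b * k + d * u) by ring,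
        show (k + u) - ((b + d) * 0 - (k + u)) = 2 * (k + u) by ring]
    rw [mul_div_mul_left _ _ (two_ne_zero)]
  rw [hG0] at hlim
  refine hlim.congr' ?_
  filter_upwards [eventually_gt_atTop (max 0 ((b + d) / (k + u)))] with a ha
  have ha0 : 0 < a := lt_of_le_of_lt (le_max_left _ _) ha
  have hTa : T a < 0 := by
    rw [hT]
    have := (div_lt_iff₀ hc0).mp (lt_of_le_of_lt (le_max_right _ _) ha)
    linarith
  have hR : 0 < T a ^ 2 - 4 * D a := by
    rw [hT, hD]
    nlinarith [sq_nonneg (a * (k - u) + (b - d)), mul_pos (mul_pos ha0 ha0) (mul_pos hk hu)]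
  have hsq : Real.sqrt (T a ^ 2 - 4 * D a) ^ 2 = T a ^ 2 - 4 * D a := Real.sq_sqrt hR.le
  have hsnn : 0 ≤ Real.sqrt (T a ^ 2 - 4 * D a) := Real.sqrt_nonneg _
  have key : (k + u) ^ 2 + 2 * (b - d) * (k - u) * a⁻¹ + (b - d) ^ 2 * (a⁻¹) ^ 2
      = (T a ^ 2 - 4 * D a) * (a⁻¹) ^ 2 := by
    rw [hT, hD]; field_simp; ring
  have hsqrt_eq : Real.sqrt ((k + u) ^ 2 + 2 * (b - d) * (k - u) * a⁻¹ + (b - d) ^ 2 * a⁻¹ ^ 2)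
      = Real.sqrt (T a ^ 2 - 4 * D a) * a⁻¹ := by
    rw [key, Real.sqrt_mul hR.le, Real.sqrt_sq (inv_nonneg.mpr ha0.le)]
  have hden : 0 < Real.sqrt (T a ^ 2 - 4 * D a) - T a := by linarith
  rw [hG]
  simp only
  rw [hsqrt_eq, hlam]
  have hane : a ≠ 0 := ne_of_gt ha0
  have hTval : (b + d) * a⁻¹ - (k + u) = T a * a⁻¹ := by
    rw [hT]; field_simp
  have hDval : b * d * a⁻¹ - (b * k + d * u) = D a * a⁻¹ := by
    rw [hD]; field_simp
  rw [hTval, hDval, show Real.sqrt (T a ^ 2 - 4 * D a) * a⁻¹ - T a * a⁻¹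
      = (Real.sqrt (T a ^ 2 - 4 * D a) - T a) * a⁻¹ by ring]
  rw [show -2 * (D a * a⁻¹) = (-2 * D a) * a⁻¹ by ring,
      mul_div_mul_right _ _ (inv_ne_zero hane)]
  rw [div_eq_div_iff hden.ne' (two_ne_zero)]
  nlinarith [hsq]
end

section
/- Let A be an n×n real Metzler matrix (all off-diagonal entries nonnegative) that is irreducible, in the sense that there exist a real number r and a positive integer m such that every entry of (r·I + A)^m is strictly positive. Suppose in addition that every column of A sums to zero. Then 0 is an eigenvalue of A (with left eigenvector the all-ones row vector), and every complex eigenvalue μ of A with μ ≠ 0 satisfies Re μ < 0. -/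
/-!
The all-ones vector is a left eigenvector for `0`. For the other eigenvalues apply Gershgorin's
theorem to the columns: the disc of column `k` has centre `A k k` and radius
`∑ i ≠ k, |A i k| = ∑ i ≠ k, A i k = -A k k`, so it is a disc centred at a point `c ≤ 0` on the
real axis passing through `0`, and such a disc meets the closed right half-plane only in `0`.
-/

open Matrix Polynomial

theorem Complex.re_neg_of_mem_closedBall_neg {c : ℝ} {μ : ℂ}
    (h : μ ∈ Metric.closedBall (c : ℂ) (-c)) (hμ : μ ≠ 0) : μ.re < 0 := by
  rw [Metric.mem_closedBall, dist_eq] at h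
  have hc : c ≤ 0 := by linarith [norm_nonneg (μ - c)]
  have hsq : (μ.re - c) ^ 2 + μ.im ^ 2 ≤ c ^ 2 := by
    have hnorm : ‖μ - c‖ ^ 2 = (μ.re - c) ^ 2 + μ.im ^ 2 := by
      rw [Complex.sq_norm, normSq_apply]
      simp only [sub_re, ofReal_re, sub_im, ofReal_im, sub_zero]
      ring
    nlinarith [norm_nonneg (μ - c)]
  by_contra! hre
  exact hμ (Complex.ext (by simp only [zero_re]; nlinarith) (by simp only [zero_im]; nlinarith))

namespace Matrix

def IsMetzler {ι : Type*} (A : Matrix ι ι ℝ) : Prop := ∀ i j, i ≠ j → 0 ≤ A i j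

variable {ι : Type*} [Fintype ι] [DecidableEq ι]

theorem isRoot_charpoly_of_vecMul_eq_smul {R : Type*} [CommRing R] [IsDomain R]
    {A : Matrix ι ι R} {v : ι → R} {μ : R} (hv : v ≠ 0) (h : v ᵥ* A = μ • v) :
    A.charpoly.IsRoot μ := by
  rw [← charpoly_transpose, ← charpoly_toLin', ← Module.End.hasEigenvalue_iff_isRoot_charpoly]
  refine Module.End.hasEigenvalue_of_hasEigenvector (x := v) ⟨?_, hv⟩
  rw [Module.End.mem_eigenspace_iff, toLin'_apply, mulVec_transpose, h]

theorem exists_mem_closedBall_sum_col_of_isRoot_charpoly {K : Type*} [NormedField K]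
    {A : Matrix ι ι K} {μ : K} (h : A.charpoly.IsRoot μ) :
    ∃ k, μ ∈ Metric.closedBall (A k k) (∑ i ∈ Finset.univ.erase k, ‖A i k‖) := by
  rw [← charpoly_transpose, ← charpoly_toLin', ← Module.End.hasEigenvalue_iff_isRoot_charpoly] at h
  exact eigenvalue_mem_ball h

theorem IsMetzler.re_neg_of_isRoot_charpoly_map {A : Matrix ι ι ℝ} (hA : A.IsMetzler)
    (hcols : ∀ j, ∑ i, A i j = 0) {μ : ℂ} (hμ : (A.charpoly.map (algebraMap ℝ ℂ)).IsRoot μ)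
    (hμ0 : μ ≠ 0) : μ.re < 0 := by
  rw [← charpoly_map] at hμ
  obtain ⟨k, hk⟩ := exists_mem_closedBall_sum_col_of_isRoot_charpoly hμ
  have hradius : ∑ i ∈ Finset.univ.erase k, ‖A.map (algebraMap ℝ ℂ) i k‖ = -A k k := by
    rw [← zero_sub, ← hcols k, ← Finset.sum_erase_eq_sub (Finset.mem_univ k)]
    refine Finset.sum_congr rfl fun i hi => ?_
    rw [map_apply, Complex.coe_algebraMap, Complex.norm_real,
      Real.norm_of_nonneg (hA i k (Finset.ne_of_mem_erase hi))]
  rw [hradius, map_apply, Complex.coe_algebraMap] at hk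
  exact Complex.re_neg_of_mem_closedBall_neg hk hμ0

end Matrix

theorem metzler_zero_column_sums_spectrum_general {n : ℕ} (hn : 0 < n)
    (A : Matrix (Fin n) (Fin n) ℝ)
    (hMetzler : ∀ i j, i ≠ j → 0 ≤ A i j)
    (hcols : ∀ j, ∑ i, A i j = 0) :
    Matrix.vecMul (fun _ => (1 : ℝ)) A = 0 ∧
    A.charpoly.IsRoot 0 ∧
    (∀ μ : ℂ, (A.charpoly.map (algebraMap ℝ ℂ)).IsRoot μ → μ ≠ 0 → μ.re < 0) := by
  have hones : Matrix.vecMul (fun _ => (1 : ℝ)) A = 0 := by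
    ext j
    simpa [vecMul, dotProduct] using hcols j
  have hones_ne : (fun _ => (1 : ℝ)) ≠ (0 : Fin n → ℝ) :=
    Function.ne_iff.2 ⟨⟨0, hn⟩, one_ne_zero⟩
  refine ⟨hones, isRoot_charpoly_of_vecMul_eq_smul hones_ne (by rw [hones, zero_smul]), ?_⟩
  exact fun μ hμ hμ0 => IsMetzler.re_neg_of_isRoot_charpoly_map hMetzler hcols hμ hμ0

/-- An irreducible Metzler matrix whose columns all sum to zero has `0` as an
eigenvalue, with left eigenvector the all-ones row vector, and every other complex
eigenvalue has strictly negative real part. -/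
theorem metzler_zero_column_sums_spectrum {n : ℕ} (hn : 0 < n)
    (A : Matrix (Fin n) (Fin n) ℝ)
    (hMetzler : ∀ i j, i ≠ j → 0 ≤ A i j)
    (hirr : ∃ (r : ℝ) (m : ℕ), 0 < m ∧
      ∀ i j, 0 < ((r • (1 : Matrix (Fin n) (Fin n) ℝ) + A) ^ m) i j)
    (hcols : ∀ j, ∑ i, A i j = 0) :
    Matrix.vecMul (fun _ => (1 : ℝ)) A = 0 ∧
    A.charpoly.IsRoot 0 ∧
    (∀ μ : ℂ, (A.charpoly.map (algebraMap ℝ ℂ)).IsRoot μ → μ ≠ 0 → μ.re < 0) :=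
  metzler_zero_column_sums_spectrum_general hn A hMetzler hcols
end
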